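/- Let M ≥ N ≥ 1 be integers, and for n ≥ 0 set f_n(x) = L_n^{(2(M−N))}(2Mx). Then for all integers j, k ≥ 0: ⟨f_j, f_k⟩_4 = (1/(2M))^{2(M−N)+1} · (j+2(M−N))!/(j−1)! if j = k+1 (with j ≥ 1); ⟨f_j, f_k⟩_4 = −(1/(2M))^{2(M−N)+1} · (k+2(M−N))!/(k−1)! if k = j+1 (with k ≥ 1); and ⟨f_j, f_k⟩_4 = 0 whenever |j − k| ≠ 1. -/

import Mathlib

/-!
Substituting `u = 2Mx` turns the skew product into
`(2M)^{-(α+1)} ∫_0^∞ u^{α+1} (L_j L_k' - L_j' L_k) e^{-u} du` with `α = 2(M-N)`.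
The identity `x L_{n+1}' = (n+1) L_{n+1} - (n+1+α) L_n` rewrites `u^{α+1} L_j L_k'` as a
combination of `u^α L_j L_k` and `u^α L_j L_{k-1}`, whose integrals are given by orthogonality:
`∫_0^∞ u^α L_m L_n e^{-u} du = δ_{mn} (n+α)!/n!`. Since `∫_0^∞ u^k e^{-u} du = k!`, orthogonality
comes down to the alternating binomial identity
`∑_k (-1)^k C(n+α, α+k) C(α+m+k, k) = (-1)^n C(m, n)`.
-/

open MeasureTheory

/-- The generalized Laguerre polynomial
`L_n^(α)(x) = ∑_{k=0}^{n} (-1)^k (n+α choose n-k) x^k / k!`. -/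
noncomputable def genLaguerre (n α : ℕ) (x : ℝ) : ℝ :=
  ∑ k ∈ Finset.range (n + 1),
    (-1 : ℝ) ^ k * ((n + α).choose (n - k) : ℝ) * x ^ k / (k.factorial : ℝ)

/-- The skew inner product
`⟨f, g⟩₄ = ∫_0^∞ (f(x) g'(x) - f'(x) g(x)) x^(2(M-N)+1) e^(-2Mx) dx`. -/
noncomputable def skewInner (M N : ℕ) (f g : ℝ → ℝ) : ℝ :=
  ∫ x in Set.Ioi (0 : ℝ),
    (f x * deriv g x - deriv f x * g x) * x ^ (2 * (M - N) + 1) *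
      Real.exp (-(2 * (M : ℝ)) * x)

open Finset Polynomial
open scoped Nat

/-- `(α + m)! * altChooseSum n m α` is the moment `∫_0^∞ x^(α+m) L_n^(α)(x) e^(-x) dx`. -/
def altChooseSum (n m α : ℕ) : ℤ :=
  ∑ k ∈ range (n + 1), (-1) ^ k * ((n + α).choose (α + k) * (α + m + k).choose k : ℕ)

theorem altChooseSum_zero_right (n α : ℕ) :
    altChooseSum n 0 α = if n = 0 then 1 else 0 := by
  have hterm (k : ℕ) :
      (n + α).choose (α + k) * (α + 0 + k).choose k = (n + α).choose α * n.choose k := by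
    rw [add_zero, ← Nat.choose_symm_add, Nat.choose_mul (Nat.le_add_right α k)]
    simp only [Nat.add_sub_cancel, Nat.add_sub_cancel_left]
  unfold altChooseSum
  simp_rw [hterm, Nat.cast_mul, mul_left_comm _ ((n + α).choose α : ℤ)]
  rw [← mul_sum, Int.alternating_sum_range_choose]
  split_ifs with h <;> simp [h]

theorem altChooseSum_succ_succ (n m α : ℕ) :
    altChooseSum (n + 1) (m + 1) α = altChooseSum (n + 1) m α - altChooseSum n m (α + 1) := by
  have pascal (k : ℕ) : (α + (m + 1) + (k + 1)).choose (k + 1) =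
      (α + m + (k + 1)).choose (k + 1) + (α + 1 + m + k).choose k := by
    rw [show α + (m + 1) + (k + 1) = α + m + k + 1 + 1 by omega, Nat.choose_succ_succ', add_comm,
      show α + m + (k + 1) = α + m + k + 1 by omega, show α + 1 + m + k = α + m + k + 1 by omega]
  have shift (k : ℕ) : α + (k + 1) = α + 1 + k := by omega
  unfold altChooseSum
  rw [sum_range_succ' _ (n + 1), sum_range_succ' _ (n + 1), show n + 1 + α = n + (α + 1) by omega,
    eq_sub_iff_add_eq, add_right_comm, ← sum_add_distrib]
  congr 1
  · refine sum_congr rfl fun k _ => ?_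
    rw [pascal, shift k]
    push_cast
    ring
  · simp

theorem altChooseSum_eq (n m α : ℕ) : altChooseSum n m α = (-1) ^ n * m.choose n := by
  induction m generalizing n α with
  | zero =>
    rw [altChooseSum_zero_right]
    rcases n with _ | n <;> simp
  | succ m ih =>
    rcases n with _ | n
    · simp [altChooseSum]
    · rw [altChooseSum_succ_succ, ih, ih, Nat.choose_succ_succ']
      push_cast
      ring

/-- The coefficient `(n+α).choose (α+k)` equals `(n+α).choose (n-k)` for `k ≤ n` and vanishes
for `k > n`, which avoids truncated subtraction in `coeff_laguerre`. -/
noncomputable def laguerre (n α : ℕ) : ℝ[X] :=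
  ∑ k ∈ range (n + 1), C ((-1 : ℝ) ^ k * (n + α).choose (α + k) / k !) * X ^ k

theorem coeff_laguerre (n α k : ℕ) :
    (laguerre n α).coeff k = (-1 : ℝ) ^ k * (n + α).choose (α + k) / k ! := by
  simp only [laguerre, finsetSum_coeff, coeff_C_mul_X_pow, sum_ite_eq, mem_range]
  split_ifs with hk
  · rfl
  · rw [Nat.choose_eq_zero_of_lt (by omega)]
    simp

theorem genLaguerre_eq_eval_laguerre (n α : ℕ) (x : ℝ) :
    genLaguerre n α x = (laguerre n α).eval x := by
  simp only [genLaguerre, laguerre, eval_finsetSum, eval_mul, eval_C, eval_pow, eval_X]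
  refine sum_congr rfl fun k hk => ?_
  rw [Nat.choose_symm_of_eq_add (by grind : n + α = n - k + (α + k))]
  ring

theorem coeff_X_mul_derivative {R : Type*} [Semiring R] (p : R[X]) (k : ℕ) :
    (X * derivative p).coeff k = p.coeff k * k := by
  rcases k with _ | k
  · simp
  · rw [coeff_X_mul, coeff_derivative]
    push_cast
    rfl

theorem X_mul_derivative_laguerre (n α : ℕ) :
    X * derivative (laguerre (n + 1) α) =
      C ((n + 1 : ℕ) : ℝ) * laguerre (n + 1) α - C ((n + 1 + α : ℕ) : ℝ) * laguerre n α := by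
  ext k
  simp only [coeff_X_mul_derivative, coeff_sub, coeff_C_mul, coeff_laguerre]
  have key : ((n + α).choose (α + k) * (n + α + 1) : ℝ) =
      (n + α + 1).choose (α + k) * ((n + 1 : ℝ) - k) := by
    rcases le_or_gt k (n + 1) with hk | hk
    · have h := Nat.choose_mul_succ_eq (n + α) (α + k)
      rw [show n + α + 1 - (α + k) = n + 1 - k by omega] at h
      have h' := congrArg (Nat.cast : ℕ → ℝ) h
      push_cast [Nat.cast_sub hk] at h'
      exact h'
    · rw [Nat.choose_eq_zero_of_lt (by omega : n + α < α + k),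
        Nat.choose_eq_zero_of_lt (by omega : n + α + 1 < α + k)]
      simp
  rw [show n + 1 + α = n + α + 1 by omega]
  push_cast
  linear_combination (-1) ^ k / (k ! : ℝ) * key

/-- The functional `p ↦ ∫_0^∞ p(x) e^(-x) dx` (see `integral_eval_mul_exp_neg`), defined through
the moments `k!` so that it is linear by construction. -/
noncomputable def expWeightIntegral : ℝ[X] →ₗ[ℝ] ℝ :=
  lsum fun k => (k ! : ℝ) • LinearMap.id

theorem expWeightIntegral_C_mul_X_pow (a : ℝ) (k : ℕ) :
    expWeightIntegral (C a * X ^ k) = a * k ! := by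
  rw [expWeightIntegral, lsum_apply, C_mul_X_pow_eq_monomial, sum_monomial_index] <;> simp [mul_comm]

theorem integrableOn_pow_mul_exp_neg (k : ℕ) :
    IntegrableOn (fun x : ℝ => x ^ k * Real.exp (-x)) (Set.Ioi 0) := by
  refine (Real.GammaIntegral_convergent (s := k + 1) (by positivity)).congr_fun
    (fun x _ => ?_) measurableSet_Ioi
  simp [mul_comm, ← Real.rpow_natCast]

theorem integral_pow_mul_exp_neg (k : ℕ) :
    ∫ x in Set.Ioi (0 : ℝ), x ^ k * Real.exp (-x) = k ! := by
  rw [← Real.Gamma_nat_eq_factorial, Real.Gamma_eq_integral (by positivity)]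
  refine setIntegral_congr_fun measurableSet_Ioi (fun x _ => ?_)
  simp [mul_comm, ← Real.rpow_natCast]

theorem integral_eval_mul_exp_neg (p : ℝ[X]) :
    ∫ x in Set.Ioi (0 : ℝ), p.eval x * Real.exp (-x) = expWeightIntegral p := by
  simp_rw [eval_eq_sum_range, sum_mul, mul_assoc]
  rw [integral_finsetSum _ fun k _ => (integrableOn_pow_mul_exp_neg k).const_mul _]
  simp_rw [integral_const_mul, integral_pow_mul_exp_neg]
  rw [expWeightIntegral, lsum_apply, sum_over_range _ (by simp)]
  simp [mul_comm]

theorem expWeightIntegral_X_pow_mul_laguerre (n m α : ℕ) :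
    expWeightIntegral (X ^ (α + m) * laguerre n α) = (α + m)! * ((-1) ^ n * m.choose n) := by
  have hsum := congrArg (Int.cast : ℤ → ℝ) (altChooseSum_eq n m α)
  push_cast [altChooseSum] at hsum
  rw [← hsum, laguerre, mul_sum, map_sum, mul_sum]
  refine sum_congr rfl fun k _ => ?_
  rw [mul_left_comm, ← pow_add, expWeightIntegral_C_mul_X_pow,
    ← Nat.add_choose_mul_factorial_mul_factorial (α + m) k]
  push_cast
  field_simp

theorem expWeightIntegral_laguerre_mul_laguerre (α m n : ℕ) :
    expWeightIntegral (X ^ α * (laguerre m α * laguerre n α)) =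
      if m = n then ((n + α)! / n ! : ℝ) else 0 := by
  wlog hmn : m ≤ n generalizing m n
  · rw [mul_comm (laguerre m α), this n m (by omega)]
    simp only [eq_comm (a := n)]
    split_ifs with h <;> simp [h]
  have hexpand : X ^ α * (laguerre m α * laguerre n α) =
      ∑ i ∈ range (m + 1), C ((-1 : ℝ) ^ i * (m + α).choose (α + i) / i !) *
        (X ^ (α + i) * laguerre n α) := by
    rw [laguerre.eq_1 m, sum_mul, mul_sum]
    refine sum_congr rfl fun i _ => ?_
    ring
  rw [hexpand, map_sum]
  simp_rw [← smul_eq_C_mul, map_smul, expWeightIntegral_X_pow_mul_laguerre, smul_eq_mul]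
  rw [sum_eq_single n]
  · have hsq : ((-1 : ℝ) ^ n) ^ 2 = 1 := by rw [← pow_mul, mul_comm, pow_mul, neg_one_sq, one_pow]
    split_ifs with h
    · subst h
      rw [add_comm α, Nat.choose_self, Nat.choose_self]
      linear_combination ((m + α)! / m ! : ℝ) * hsq
    · rw [Nat.choose_eq_zero_of_lt (by omega : m + α < α + n), Nat.cast_zero]
      ring
  · intro i hi hin
    rw [Nat.choose_eq_zero_of_lt (by grind : i < n), Nat.cast_zero]
    ring
  · intro hn
    rw [Nat.choose_eq_zero_of_lt (by grind : m + α < α + n), Nat.cast_zero]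
    ring

theorem expWeightIntegral_laguerre_mul_X_mul_derivative (α a b : ℕ) :
    expWeightIntegral (X ^ α * (laguerre a α * (X * derivative (laguerre b α)))) =
      if a = b then (b * (b + α)! / b ! : ℝ)
      else if a + 1 = b then -((a + 1 + α)! / a ! : ℝ) else 0 := by
  rcases b with _ | k
  · simp [laguerre]
  have hexpand : X ^ α * (laguerre a α * (X * derivative (laguerre (k + 1) α))) =
      ((k + 1 : ℕ) : ℝ) • (X ^ α * (laguerre a α * laguerre (k + 1) α)) -
        ((k + 1 + α : ℕ) : ℝ) • (X ^ α * (laguerre a α * laguerre k α)) := by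
    rw [X_mul_derivative_laguerre, smul_eq_C_mul, smul_eq_C_mul]
    ring
  rw [hexpand, map_sub, map_smul, map_smul, expWeightIntegral_laguerre_mul_laguerre,
    expWeightIntegral_laguerre_mul_laguerre, smul_eq_mul, smul_eq_mul]
  split_ifs <;> first | omega | subst_vars
  all_goals
    rw [show k + 1 + α = k + α + 1 by omega]
    push_cast [Nat.factorial_succ]
    ring

theorem expWeightIntegral_skew_laguerre (α j k : ℕ) :
    expWeightIntegral (X ^ (α + 1) * (laguerre j α * derivative (laguerre k α) -
        derivative (laguerre j α) * laguerre k α)) =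
      if j = k + 1 then ((k + 1 + α)! / k ! : ℝ)
      else if k = j + 1 then -((j + 1 + α)! / j ! : ℝ) else 0 := by
  have hsplit : X ^ (α + 1) * (laguerre j α * derivative (laguerre k α) -
        derivative (laguerre j α) * laguerre k α) =
      X ^ α * (laguerre j α * (X * derivative (laguerre k α))) -
        X ^ α * (laguerre k α * (X * derivative (laguerre j α))) := by
    ring
  rw [hsplit, map_sub, expWeightIntegral_laguerre_mul_X_mul_derivative,
    expWeightIntegral_laguerre_mul_X_mul_derivative]
  split_ifs <;> first | omega | subst_vars
  all_goals simp

theorem integral_eval_comp_mul_mul_exp_neg (R : ℝ[X]) {c : ℝ} (hc : 0 < c) :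
    ∫ x in Set.Ioi (0 : ℝ), R.eval (c * x) * Real.exp (-(c * x)) = c⁻¹ * expWeightIntegral R := by
  rw [integral_comp_mul_left_Ioi (fun u => R.eval u * Real.exp (-u)) 0 hc, mul_zero,
    integral_eval_mul_exp_neg, smul_eq_mul]

theorem skewInner_eval_comp_mul (M N : ℕ) (hM : 0 < M) (p q : ℝ[X]) :
    skewInner M N (fun x => p.eval (2 * M * x)) (fun x => q.eval (2 * M * x)) =
      (1 / (2 * M : ℝ)) ^ (2 * (M - N) + 1) *
        expWeightIntegral (X ^ (2 * (M - N) + 1) * (p * derivative q - derivative p * q)) := by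
  rw [skewInner]
  set c : ℝ := 2 * M
  set s := 2 * (M - N)
  have hc : 0 < c := by positivity
  have hderiv (r : ℝ[X]) (x : ℝ) :
      deriv (fun x => r.eval (c * x)) x = c * (derivative r).eval (c * x) := by
    rw [deriv_comp_mul_left c (fun y => r.eval y), Polynomial.deriv, smul_eq_mul]
  have hintegrand (x : ℝ) :
      (p.eval (c * x) * deriv (fun x => q.eval (c * x)) x -
          deriv (fun x => p.eval (c * x)) x * q.eval (c * x)) * x ^ (s + 1) * Real.exp (-c * x) =
        c⁻¹ ^ s * ((X ^ (s + 1) * (p * derivative q - derivative p * q)).eval (c * x) *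
          Real.exp (-(c * x))) := by
    simp only [hderiv, eval_mul, eval_sub, eval_pow, eval_X, neg_mul, inv_pow]
    field_simp
    ring
  simp_rw [hintegrand]
  rw [integral_const_mul, integral_eval_comp_mul_mul_exp_neg _ hc]
  ring

theorem stmt_11 (M N : ℕ) (hN : 1 ≤ N) (hMN : N ≤ M) :
    (∀ k : ℕ,
      skewInner M N (fun x => genLaguerre (k + 1) (2 * (M - N)) (2 * (M : ℝ) * x))
          (fun x => genLaguerre k (2 * (M - N)) (2 * (M : ℝ) * x))
        = (1 / (2 * (M : ℝ))) ^ (2 * (M - N) + 1) *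
            ((k + 1 + 2 * (M - N)).factorial : ℝ) / (k.factorial : ℝ)) ∧
    (∀ j : ℕ,
      skewInner M N (fun x => genLaguerre j (2 * (M - N)) (2 * (M : ℝ) * x))
          (fun x => genLaguerre (j + 1) (2 * (M - N)) (2 * (M : ℝ) * x))
        = -((1 / (2 * (M : ℝ))) ^ (2 * (M - N) + 1) *
            ((j + 1 + 2 * (M - N)).factorial : ℝ) / (j.factorial : ℝ))) ∧
    (∀ j k : ℕ, j ≠ k + 1 → k ≠ j + 1 →
      skewInner M N (fun x => genLaguerre j (2 * (M - N)) (2 * (M : ℝ) * x))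
          (fun x => genLaguerre k (2 * (M - N)) (2 * (M : ℝ) * x)) = 0) := by
  have hM : 0 < M := by omega
  simp only [genLaguerre_eq_eval_laguerre]
  refine ⟨fun k => ?_, fun j => ?_, fun j k hjk hkj => ?_⟩ <;>
    rw [skewInner_eval_comp_mul M N hM, expWeightIntegral_skew_laguerre]
  · rw [if_pos rfl]
    ring
  · rw [if_neg (by omega), if_pos rfl]
    ring
  · rw [if_neg hjk, if_neg hkj, mul_zero]
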